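/- arXiv:1210.0572 — 3 statements merged into one kernel-verified Lean document; each statement's English description precedes it below -/
import Mathlib

section
/- Let n ≥ 5 be an integer and let X be a random variable with binomial distribution with parameters n and p = 1/2. Then Pr[ |X − n/2| < (1/2)·sqrt(n/2) ] ≤ 3/4. -/
open MeasureTheory


lemma cb_sq (m : ℕ) : (Nat.centralBinom m)^2 * (3*m+1) ≤ 16^m := by
  induction m with
  | zero => simp [Nat.centralBinom]
  | succ m ih =>
    have h := Nat.succ_mul_centralBinom_succ m
    have hpoly : (2*(2*m+1))^2 * (3*(m+1)+1) ≤ (m+1)^2 * 16 * (3*m+1) := by nlinarith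
    have key : (m+1)^2 * ((Nat.centralBinom (m+1))^2 * (3*(m+1)+1)) ≤ (m+1)^2 * 16^(m+1) := by
      have e : (m+1)^2 * (Nat.centralBinom (m+1))^2 = (2*(2*m+1))^2 * (Nat.centralBinom m)^2 := by
        rw [← mul_pow, h, mul_pow]
      calc (m+1)^2 * ((Nat.centralBinom (m+1))^2 * (3*(m+1)+1))
          = ((m+1)^2 * (Nat.centralBinom (m+1))^2) * (3*(m+1)+1) := by ring
        _ = (2*(2*m+1))^2 * (Nat.centralBinom m)^2 * (3*(m+1)+1) := by rw [e]
        _ = ((2*(2*m+1))^2 * (3*(m+1)+1)) * (Nat.centralBinom m)^2 := by ring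
        _ ≤ ((m+1)^2 * 16 * (3*m+1)) * (Nat.centralBinom m)^2 := Nat.mul_le_mul_right _ hpoly
        _ = (m+1)^2 * (16 * ((Nat.centralBinom m)^2 * (3*m+1))) := by ring
        _ ≤ (m+1)^2 * (16 * 16^m) := by
            apply Nat.mul_le_mul_left; exact Nat.mul_le_mul_left _ ih
        _ = (m+1)^2 * 16^(m+1) := by ring
    exact Nat.le_of_mul_le_mul_left key (by positivity)

lemma sq_le_imp {a b : ℝ} (ha : 0 ≤ a) (hb : 0 ≤ b) (h : a^2 ≤ b^2) : a ≤ b :=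
  (pow_le_pow_iff_left₀ ha hb two_ne_zero).mp h

lemma count_bound_even (m j : ℕ) (hj : 4*j^2 < m) :
    ((2*j+1 : ℕ) : ℝ) * (Nat.choose (2*m) m) ≤ (3/4) * 2^(2*m) := by
  have hpoly : 16*(2*j+1)^2 ≤ 9*(3*m+1) := by
    rcases Nat.eq_zero_or_pos j with h0 | h1
    · subst h0; omega
    · nlinarith [sq_nonneg (j-1), Nat.one_le_iff_ne_zero.mpr (by omega : j ≠ 0)]
  have hnat : 16 * ((2*j+1) * Nat.centralBinom m)^2 ≤ 9 * 16^m := by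
    calc 16 * ((2*j+1) * Nat.centralBinom m)^2
        = (16*(2*j+1)^2) * (Nat.centralBinom m)^2 := by ring
      _ ≤ (9*(3*m+1)) * (Nat.centralBinom m)^2 := Nat.mul_le_mul_right _ hpoly
      _ = 9 * ((Nat.centralBinom m)^2 * (3*m+1)) := by ring
      _ ≤ 9 * 16^m := Nat.mul_le_mul_left _ (cb_sq m)
  have hc : Nat.choose (2*m) m = Nat.centralBinom m := rfl
  rw [hc]
  have h2 : (2:ℝ)^(2*m) = 4^m := by rw [pow_mul]; norm_num
  have hr : (((2*j+1) * Nat.centralBinom m : ℕ) : ℝ)^2 ≤ ((3/4) * 2^(2*m))^2 := by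
    have hcast := (Nat.cast_le (α := ℝ)).mpr hnat
    push_cast at hcast
    have h16 : (16:ℝ)^m = (4^m)^2 := by rw [← pow_mul, mul_comm, pow_mul]; norm_num
    push_cast
    rw [h2]
    nlinarith [hcast, h16]
  have hfin := sq_le_imp (by positivity) (by positivity) hr
  push_cast at hfin ⊢
  linarith

lemma count_bound_odd (m j : ℕ) (hj : (2*j+1)^2 ≤ m) :
    ((2*j+2 : ℕ) : ℝ) * (Nat.choose (2*m+1) m) ≤ (3/4) * 2^(2*m+1) := by
  have hpoly : 16*(j+1)^2*(2*m+1)^2 ≤ 9*(m+1)^2*(3*m+1) := by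
    obtain ⟨t, ht⟩ := Nat.exists_eq_add_of_le hj
    subst ht
    rcases Nat.eq_zero_or_pos j with h0 | h1
    · subst h0; nlinarith [sq_nonneg t, t.zero_le]
    · have h3 : j^3 ≤ j^4 := Nat.pow_le_pow_right h1 (by omega)
      have h2 : j^2 ≤ j^3 := Nat.pow_le_pow_right h1 (by omega)
      have hjj : j ≤ j^2 := Nat.le_self_pow (by omega) j
      have h5 : j^3 ≤ j^5 := Nat.pow_le_pow_right h1 (by omega)
      have h6 : j^3 ≤ j^6 := Nat.pow_le_pow_right h1 (by omega)
      nlinarith [sq_nonneg (j*t), sq_nonneg t, Nat.mul_le_mul h2 (Nat.le_refl t), t.zero_le]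
  have hch : (m+1) * Nat.choose (2*m+1) m = (2*m+1) * Nat.centralBinom m := by
    have h1 := Nat.add_one_mul_choose_eq (2*m) m
    have h2 : Nat.choose (2*m+1) (m+1) = Nat.choose (2*m+1) m := by
      rw [← Nat.choose_symm (by omega : m+1 ≤ 2*m+1)]
      congr 1; omega
    have h1' : (2*m+1) * Nat.choose (2*m) m = Nat.choose (2*m+1) m * (m+1) := by
      have := Nat.add_one_mul_choose_eq (2*m) m
      simpa [Nat.succ_eq_add_one, h2] using this
    show (m+1) * Nat.choose (2*m+1) m = (2*m+1) * Nat.choose (2*m) m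
    rw [mul_comm]; exact h1'.symm
  have hnat : 16 * ((m+1) * ((2*j+2) * Nat.choose (2*m+1) m))^2 ≤ (m+1)^2 * (36 * 16^m) := by
    calc 16 * ((m+1) * ((2*j+2) * Nat.choose (2*m+1) m))^2
        = 16 * (2*j+2)^2 * ((m+1) * Nat.choose (2*m+1) m)^2 := by ring
      _ = 16 * (2*j+2)^2 * ((2*m+1) * Nat.centralBinom m)^2 := by rw [hch]
      _ = 4 * (16*(j+1)^2*(2*m+1)^2) * (Nat.centralBinom m)^2 := by ring
      _ ≤ 4 * (9*(m+1)^2*(3*m+1)) * (Nat.centralBinom m)^2 := by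
          exact Nat.mul_le_mul_right _ (Nat.mul_le_mul_left _ hpoly)
      _ = (m+1)^2 * (36 * ((Nat.centralBinom m)^2 * (3*m+1))) := by ring
      _ ≤ (m+1)^2 * (36 * 16^m) := Nat.mul_le_mul_left _ (Nat.mul_le_mul_left _ (cb_sq m))
  have hnat2 : 16 * ((2*j+2) * Nat.choose (2*m+1) m)^2 ≤ 36 * 16^m := by
    have h := hnat
    have e : 16 * ((m+1) * ((2*j+2) * Nat.choose (2*m+1) m))^2
        = (m+1)^2 * (16 * ((2*j+2) * Nat.choose (2*m+1) m)^2) := by ring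
    rw [e] at h
    exact Nat.le_of_mul_le_mul_left h (by positivity)
  have h2 : (2:ℝ)^(2*m+1) = 2 * 4^m := by rw [pow_succ, pow_mul]; ring
  have hr : (((2*j+2) * Nat.choose (2*m+1) m : ℕ) : ℝ)^2 ≤ ((3/4) * 2^(2*m+1))^2 := by
    have hcast := (Nat.cast_le (α := ℝ)).mpr hnat2
    push_cast at hcast
    have h16 : (16:ℝ)^m = (4^m)^2 := by rw [← pow_mul, mul_comm, pow_mul]; norm_num
    push_cast
    rw [h2]
    nlinarith [hcast, h16]
  have hfin := sq_le_imp (by positivity) (by positivity) hr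
  push_cast at hfin ⊢
  linarith

/-- Let `n ≥ 5` and let `X` be binomially distributed with parameters `n` and `p = 1/2`.
Then `Pr[|X − n/2| < (1/2)·√(n/2)] ≤ 3/4`. -/
theorem binomial_half_central_bound (n : ℕ) (hn : 5 ≤ n) {Ω : Type*} [MeasurableSpace Ω]
    (μ : Measure Ω) [IsProbabilityMeasure μ] (X : Ω → ℕ)
    (hX : ∀ i : ℕ, i ≤ n →
      (μ {ω | X ω = i}).toReal =
        (n.choose i : ℝ) * (1 / 2 : ℝ) ^ i * (1 - 1 / 2 : ℝ) ^ (n - i)) :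
    (μ {ω | |(X ω : ℝ) - (n : ℝ) / 2| < (1 / 2) * Real.sqrt ((n : ℝ) / 2)}).toReal
      ≤ 3 / 4 := by
  have hn0 : (0:ℝ) < n := by exact_mod_cast (by omega : 0 < n)
  set w : ℝ := (1 / 2) * Real.sqrt ((n : ℝ) / 2) with hw
  have hwpos : 0 < w := by
    rw [hw]
    exact mul_pos (by norm_num) (Real.sqrt_pos.mpr (by positivity))
  have hw2 : w^2 = (n:ℝ)/8 := by
    rw [hw, mul_pow, Real.sq_sqrt (by positivity)]; ring
  set S : Finset ℕ := (Finset.range (n+1)).filter (fun i => |(i:ℝ) - (n:ℝ)/2| < w) with hS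
  -- Step A: event inclusion
  have hsub : {ω | |(X ω : ℝ) - (n:ℝ)/2| < w} ⊆ ⋃ i ∈ S, {ω | X ω = i} := by
    intro ω hω
    have habs : |(X ω : ℝ) - (n:ℝ)/2| < w := hω
    have hXn : X ω ≤ n := by
      by_contra hc
      push_neg at hc
      have h1 : (n:ℝ) + 1 ≤ (X ω : ℝ) := by exact_mod_cast hc
      have hwlt : w < (n:ℝ)/2 + 1 := by nlinarith [hw2, hwpos.le]
      have h2 : (X ω : ℝ) - (n:ℝ)/2 ≤ |(X ω : ℝ) - (n:ℝ)/2| := le_abs_self _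
      linarith
    exact Set.mem_biUnion
      (Finset.mem_filter.mpr ⟨Finset.mem_range.mpr (by omega), habs⟩) rfl
  -- Step B: subadditivity + toReal
  have hble : μ {ω | |(X ω : ℝ) - (n:ℝ)/2| < w} ≤ ∑ i ∈ S, μ {ω | X ω = i} :=
    le_trans (measure_mono hsub) (measure_biUnion_finset_le S _)
  have hne : ∀ i ∈ S, μ {ω | X ω = i} ≠ ⊤ := fun i _ => measure_ne_top μ _
  have htr : (μ {ω | |(X ω : ℝ) - (n:ℝ)/2| < w}).toReal
      ≤ ∑ i ∈ S, (μ {ω | X ω = i}).toReal := by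
    calc (μ {ω | |(X ω : ℝ) - (n:ℝ)/2| < w}).toReal
        ≤ (∑ i ∈ S, μ {ω | X ω = i}).toReal :=
          ENNReal.toReal_mono (ENNReal.sum_lt_top.mpr (fun i hi => lt_top_iff_ne_top.mpr (hne i hi))).ne hble
      _ = ∑ i ∈ S, (μ {ω | X ω = i}).toReal := ENNReal.toReal_sum hne
  -- Step C: term bound
  have hterm : ∀ i ∈ S, (μ {ω | X ω = i}).toReal ≤ (Nat.choose n (n/2) : ℝ) * (1/2)^n := by
    intro i hi
    obtain ⟨hir, _⟩ := Finset.mem_filter.mp hi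
    have hin : i ≤ n := Nat.lt_succ_iff.mp (Finset.mem_range.mp hir)
    rw [hX i hin]
    have hpow : (1/2:ℝ)^i * (1 - 1/2:ℝ)^(n-i) = (1/2)^n := by
      norm_num
      rw [← pow_add]
      congr 1
      omega
    calc (n.choose i:ℝ) * (1/2)^i * (1 - 1/2)^(n-i)
        = (n.choose i:ℝ) * ((1/2:ℝ)^i * (1 - 1/2:ℝ)^(n-i)) := by ring
      _ = (n.choose i:ℝ) * (1/2)^n := by rw [hpow]
      _ ≤ (n.choose (n/2):ℝ) * (1/2)^n := by
          apply mul_le_mul_of_nonneg_right _ (by positivity)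
          exact_mod_cast Nat.choose_le_middle i n
  have hsum : ∑ i ∈ S, (μ {ω | X ω = i}).toReal
      ≤ (S.card : ℝ) * ((n.choose (n/2):ℝ) * (1/2)^n) := by
    have := Finset.sum_le_card_nsmul S _ _ hterm
    simpa [nsmul_eq_mul] using this
  -- key combinatorial bound
  have hkey : (S.card : ℝ) * (n.choose (n/2) : ℝ) ≤ (3/4) * 2^n := by
    rcases Nat.even_or_odd n with ⟨m, hm⟩ | ⟨m, hm⟩
    · -- even, n = 2m
      have hm' : n = 2*m := by omega
      have hnm : (n:ℝ)/2 = (m:ℝ) := by rw [hm']; push_cast; ring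
      set k := ⌈w⌉₊ with hkdef
      have hk1 : 1 ≤ k := Nat.one_le_iff_ne_zero.mpr (Nat.ceil_pos.mpr hwpos).ne'
      set j := k - 1 with hjdef
      have hjk : j < k := by omega
      have hjw : (j:ℝ) < w := Nat.lt_ceil.mp hjk
      have hj4 : 4*j^2 < m := by
        have h1 : ((4*j^2 : ℕ):ℝ) < (m:ℝ) := by
          push_cast
          nlinarith [hjw, hw2, hm', Nat.cast_nonneg (α := ℝ) j,
            (by rw [hm']; push_cast; ring : (n:ℝ) = 2*m)]
        exact_mod_cast h1
      have hcard : S.card ≤ 2*j+1 := by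
        have hsubI : S ⊆ Finset.Icc (m - j) (m + j) := by
          intro i hi
          obtain ⟨hir, habs⟩ := Finset.mem_filter.mp hi
          rw [hnm] at habs
          obtain ⟨ha1, ha2⟩ := abs_lt.mp habs
          rw [Finset.mem_Icc]
          constructor
          · by_contra hc
            push_neg at hc
            have him : i ≤ m := by omega
            have hd : ((m - i : ℕ):ℝ) < w := by
              rw [Nat.cast_sub him]; linarith
            have := Nat.lt_ceil.mpr hd
            omega
          · by_contra hc
            push_neg at hc
            have him : m ≤ i := by omega
            have hd : ((i - m : ℕ):ℝ) < w := by
              rw [Nat.cast_sub him]; linarith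
            have := Nat.lt_ceil.mpr hd
            omega
        calc S.card ≤ (Finset.Icc (m - j) (m + j)).card := Finset.card_le_card hsubI
          _ = (m + j) + 1 - (m - j) := Nat.card_Icc _ _
          _ ≤ 2*j+1 := by omega
      have hb := count_bound_even m j hj4
      have hcR : (S.card:ℝ) ≤ ((2*j+1 : ℕ):ℝ) := by exact_mod_cast hcard
      have hch : n.choose (n/2) = Nat.choose (2*m) m := by rw [hm']; congr 1; omega
      rw [hch, hm']
      calc (S.card:ℝ) * (Nat.choose (2*m) m : ℝ)
          ≤ ((2*j+1 : ℕ):ℝ) * (Nat.choose (2*m) m : ℝ) :=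
            mul_le_mul_of_nonneg_right hcR (Nat.cast_nonneg _)
        _ ≤ (3/4) * 2^(2*m) := hb
    · -- odd, n = 2m+1
      have hm' : n = 2*m+1 := hm
      have hm2 : 2 ≤ m := by omega
      have hnm : (n:ℝ)/2 = (m:ℝ) + 1/2 := by rw [hm']; push_cast; ring
      set k := ⌈w - 1/2⌉₊ with hkdef
      have h5 : (5:ℝ) ≤ n := by exact_mod_cast hn
      have hwhalf : 1/2 < w := by
        have hsq : (1/2:ℝ)^2 < w^2 := by rw [hw2]; linarith
        nlinarith [hsq, hwpos.le]
      have hk1 : 1 ≤ k := Nat.one_le_iff_ne_zero.mpr (Nat.ceil_pos.mpr (by linarith)).ne'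
      set j := k - 1 with hjdef
      have hjk : j < k := by omega
      have hjw : (j:ℝ) < w - 1/2 := Nat.lt_ceil.mp hjk
      have hj : (2*j+1)^2 ≤ m := by
        have h1 : ((2*(2*j+1)^2 : ℕ):ℝ) < ((2*m+1 : ℕ):ℝ) := by
          push_cast
          nlinarith [hjw, hw2, Nat.cast_nonneg (α := ℝ) j,
            (by rw [hm']; push_cast; ring : (n:ℝ) = 2*m+1)]
        have h2 : 2*(2*j+1)^2 < 2*m+1 := by exact_mod_cast h1
        omega
      have hcard : S.card ≤ 2*j+2 := by
        have hsubI : S ⊆ Finset.Icc (m - j) (m + j + 1) := by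
          intro i hi
          obtain ⟨hir, habs⟩ := Finset.mem_filter.mp hi
          rw [hnm] at habs
          obtain ⟨ha1, ha2⟩ := abs_lt.mp habs
          rw [Finset.mem_Icc]
          constructor
          · by_contra hc
            push_neg at hc
            have him : i ≤ m := by omega
            have hd : ((m - i : ℕ):ℝ) < w - 1/2 := by
              rw [Nat.cast_sub him]; linarith
            have := Nat.lt_ceil.mpr hd
            omega
          · by_contra hc
            push_neg at hc
            have him : m + 1 ≤ i := by omega
            have hd : ((i - (m+1) : ℕ):ℝ) < w - 1/2 := by
              rw [Nat.cast_sub him]; push_cast; linarith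
            have := Nat.lt_ceil.mpr hd
            omega
        calc S.card ≤ (Finset.Icc (m - j) (m + j + 1)).card := Finset.card_le_card hsubI
          _ = (m + j + 1) + 1 - (m - j) := Nat.card_Icc _ _
          _ ≤ 2*j+2 := by omega
      have hb := count_bound_odd m j hj
      have hcR : (S.card:ℝ) ≤ ((2*j+2 : ℕ):ℝ) := by exact_mod_cast hcard
      have hch : n.choose (n/2) = Nat.choose (2*m+1) m := by rw [hm']; congr 1; omega
      rw [hch, hm']
      calc (S.card:ℝ) * (Nat.choose (2*m+1) m : ℝ)
          ≤ ((2*j+2 : ℕ):ℝ) * (Nat.choose (2*m+1) m : ℝ) :=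
            mul_le_mul_of_nonneg_right hcR (Nat.cast_nonneg _)
        _ ≤ (3/4) * 2^(2*m+1) := hb
  -- conclude
  have hfin : (S.card : ℝ) * ((n.choose (n/2):ℝ) * (1/2)^n) ≤ 3/4 := by
    have hp : (0:ℝ) < (1/2)^n := by positivity
    have h2 : ((3/4) * 2^n) * (1/2:ℝ)^n = 3/4 := by
      rw [mul_assoc, ← mul_pow]
      norm_num
    calc (S.card : ℝ) * ((n.choose (n/2):ℝ) * (1/2)^n)
        = ((S.card : ℝ) * (n.choose (n/2):ℝ)) * (1/2)^n := by ring
      _ ≤ ((3/4) * 2^n) * (1/2)^n := mul_le_mul_of_nonneg_right hkey hp.le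
      _ = 3/4 := h2
  linarith [htr, hsum]
end

section
/- Let n ≥ 16 be an integer and let p be a real number with 1/n ≤ p ≤ 1/4. Let Y be a random variable with binomial distribution with parameters n and 2p. Then Pr[Y = ⌈2pn⌉] ≤ 0.35, where ⌈·⌉ denotes the ceiling function. -/
open MeasureTheory

private lemma binom_step (n i : ℕ) (q : ℝ) (h : i < n) :
    (n.choose (i+1) : ℝ) * q ^ (i+1) * (1 - q) ^ (n - (i+1)) * (((i:ℝ)+1) * (1 - q))
      = (n.choose i : ℝ) * q ^ i * (1 - q) ^ (n - i) * (((n:ℝ) - i) * q) := by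
  have h1 : n - (i+1) + 1 = n - i := by omega
  have h2 := Nat.choose_succ_right_eq n i
  have h3 : ((n.choose (i+1) * (i+1) : ℕ) : ℝ) = ((n.choose i * (n - i) : ℕ) : ℝ) := by
    exact_mod_cast h2
  push_cast [Nat.cast_sub h.le] at h3
  have hc : (n.choose (i+1) : ℝ) * ((i:ℝ)+1) = (n.choose i : ℝ) * ((n:ℝ) - (i:ℝ)) := by
    linarith
  have hp : (1 - q) ^ (n - i) = (1 - q) ^ (n - (i+1)) * (1 - q) := by
    rw [← pow_succ, h1]
  have hq' : q ^ (i+1) = q ^ i * q := pow_succ q i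
  calc (n.choose (i+1) : ℝ) * q ^ (i+1) * (1 - q) ^ (n - (i+1)) * (((i:ℝ)+1) * (1 - q))
      = ((n.choose (i+1) : ℝ) * ((i:ℝ)+1)) * (q ^ i * q)
          * ((1 - q) ^ (n - (i+1)) * (1 - q)) := by rw [hq']; ring
    _ = ((n.choose i : ℝ) * ((n:ℝ) - (i:ℝ))) * (q ^ i * q) * ((1 - q) ^ (n - i)) := by
        rw [hc, hp]
    _ = (n.choose i : ℝ) * q ^ i * (1 - q) ^ (n - i) * (((n:ℝ) - i) * q) := by ring

private lemma bound1_aux (K A : ℝ) (hK : 2 ≤ K) (hA : 7 ≤ A) :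
    (7:ℝ)/12 ≤ K * A / ((A + 1) * (K + 1)) := by
  rw [le_div_iff₀ (by nlinarith)]
  nlinarith [mul_nonneg (by linarith : (0:ℝ) ≤ K - 2) (by linarith : (0:ℝ) ≤ A - 7)]

private lemma bound2_aux (K A : ℝ) (hK : 2 ≤ K) (hA : 7 ≤ A) :
    (1:ℝ)/6 ≤ (K - 1) * (A - 1) / ((A + 2) * (K + 2)) := by
  rw [le_div_iff₀ (by nlinarith)]
  nlinarith [mul_nonneg (by linarith : (0:ℝ) ≤ K - 2) (by linarith : (0:ℝ) ≤ A - 7)]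

private lemma amgm_aux (r s a : ℝ) (hr : 0 < r) (hs : 0 < s)
    (h : a ^ 2 ≤ r * s) : 2 * a ≤ r + s := by
  nlinarith [sq_nonneg (r - s), sq_nonneg (r + s - 2 * a)]

set_option maxHeartbeats 1600000 in
/-- Let `n ≥ 16` and `1/n ≤ p ≤ 1/4`. If `Y` is binomially distributed with parameters
`n` and `2p`, then `Pr[Y = ⌈2pn⌉] ≤ 0.35`. -/
theorem binomial_point_mass_at_ceil (n : ℕ) (p : ℝ) (hn : 16 ≤ n) (hp1 : 1 / (n : ℝ) ≤ p)
    (hp2 : p ≤ 1 / 4) {Ω : Type*} [MeasurableSpace Ω] (μ : Measure Ω)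
    [IsProbabilityMeasure μ] (Y : Ω → ℕ)
    (hY : ∀ i : ℕ, i ≤ n →
      (μ {ω | Y ω = i}).toReal = (n.choose i : ℝ) * (2 * p) ^ i * (1 - 2 * p) ^ (n - i)) :
    (μ {ω | (Y ω : ℤ) = ⌈2 * p * (n : ℝ)⌉}).toReal ≤ 0.35 := by
  have hn16 : (16:ℝ) ≤ (n:ℝ) := by exact_mod_cast hn
  have hnpos : (0:ℝ) < (n:ℝ) := by linarith
  set q : ℝ := 2 * p with hqdef
  clear_value q
  have hqn2 : 2 ≤ q * (n:ℝ) := by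
    have h1 : 1 ≤ p * (n:ℝ) := by
      rw [div_le_iff₀ hnpos] at hp1; linarith
    nlinarith
  have hqhalf : q ≤ 1 / 2 := by rw [hqdef]; linarith
  have hqpos : 0 < q := by
    have h0 : (0:ℝ) < 1 / (n:ℝ) := by positivity
    rw [hqdef]; linarith
  have h1q : 0 < 1 - q := by linarith
  -- the ceiling value
  set c : ℤ := ⌈q * (n : ℝ)⌉ with hcdef
  have hclb : q * (n:ℝ) ≤ (c:ℝ) := Int.le_ceil _
  have hcub : (c:ℝ) < q * (n:ℝ) + 1 := Int.ceil_lt_add_one _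
  clear_value c
  have hc2 : (2:ℤ) ≤ c := by
    have : (2:ℝ) ≤ (c:ℝ) := le_trans hqn2 hclb
    exact_mod_cast this
  obtain ⟨k, hkc⟩ : ∃ k : ℕ, (k:ℤ) = c := ⟨c.toNat, Int.toNat_of_nonneg (by omega)⟩
  have hkR : (k:ℝ) = (c:ℝ) := by exact_mod_cast hkc
  have hK2 : (2:ℝ) ≤ (k:ℝ) := by rw [hkR]; linarith
  have hk2 : 2 ≤ k := by exact_mod_cast hK2
  have hqn_half : q * (n:ℝ) ≤ (n:ℝ) / 2 := by nlinarith
  have hKub : (k:ℝ) < (n:ℝ) / 2 + 1 := by rw [hkR]; linarith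
  have hA7 : (7:ℝ) ≤ (n:ℝ) - (k:ℝ) := by linarith
  have hkn : k + 2 ≤ n := by
    have h1 : ((k + 2 : ℕ) : ℝ) < (n:ℝ) := by push_cast; linarith
    exact_mod_cast h1.le
  have hkln : k < n := by omega
  -- the goal set is {Y = k}
  have hset : {ω | (Y ω : ℤ) = c} = {ω | Y ω = k} := by
    ext ω
    simp only [Set.mem_setOf_eq]
    omega
  rw [hset, hY k (by omega)]
  -- the pmf
  set F : ℕ → ℝ := fun i => (n.choose i : ℝ) * q ^ i * (1 - q) ^ (n - i) with hFdef
  have hFnn : ∀ i, 0 ≤ F i := by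
    intro i
    have h0 : (0:ℝ) ≤ (n.choose i : ℝ) := by positivity
    exact mul_nonneg (mul_nonneg h0 (by positivity)) (by positivity)
  have hFkpos : 0 < F k := by
    have hch : 0 < n.choose k := Nat.choose_pos (by omega)
    have h0 : (0:ℝ) < (n.choose k : ℝ) := by exact_mod_cast hch
    rw [hFdef]
    exact mul_pos (mul_pos h0 (pow_pos hqpos _)) (pow_pos h1q _)
  have hcast1 : ((k - 1 : ℕ) : ℝ) = (k:ℝ) - 1 := by
    push_cast [Nat.cast_sub (by omega : 1 ≤ k)]; ring
  have hcast2 : ((k - 2 : ℕ) : ℝ) = (k:ℝ) - 2 := by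
    push_cast [Nat.cast_sub (by omega : 2 ≤ k)]; ring
  -- step identities
  have hs1 : F k * ((k:ℝ) * (1 - q)) = F (k-1) * (((n:ℝ) - (k:ℝ) + 1) * q) := by
    have hst := binom_step n (k-1) q (by omega)
    rw [show k - 1 + 1 = k from by omega, hcast1] at hst
    simp only [hFdef]
    linear_combination hst
  have hs2 : F (k-1) * (((k:ℝ) - 1) * (1 - q)) = F (k-2) * (((n:ℝ) - (k:ℝ) + 2) * q) := by
    have hst := binom_step n (k-2) q (by omega)
    rw [show k - 2 + 1 = k - 1 from by omega, hcast2] at hst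
    simp only [hFdef]
    linear_combination hst
  have hs3 : F (k+1) * (((k:ℝ) + 1) * (1 - q)) = F k * (((n:ℝ) - (k:ℝ)) * q) := by
    have hst := binom_step n k q hkln
    simp only [hFdef]
    linear_combination hst
  have hs4 : F (k+2) * (((k:ℝ) + 2) * (1 - q)) = F (k+1) * (((n:ℝ) - (k:ℝ) - 1) * q) := by
    have hst := binom_step n (k+1) q (by omega)
    rw [show k + 1 + 1 = k + 2 from by omega] at hst
    push_cast at hst
    simp only [hFdef]
    linear_combination hst
  clear_value F
  -- nonzeroness facts
  have hqne : q ≠ 0 := ne_of_gt hqpos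
  have h1qne : (1 - q) ≠ 0 := ne_of_gt h1q
  have hA1ne : ((n:ℝ) - (k:ℝ) + 1) ≠ 0 := ne_of_gt (by linarith)
  have hA2ne : ((n:ℝ) - (k:ℝ) + 2) ≠ 0 := ne_of_gt (by linarith)
  have hK1ne : ((k:ℝ) + 1) ≠ 0 := ne_of_gt (by linarith)
  have hK2ne : ((k:ℝ) + 2) ≠ 0 := ne_of_gt (by linarith)
  -- ratios
  set r1 : ℝ := (k:ℝ) * (1 - q) / (((n:ℝ) - (k:ℝ) + 1) * q) with hr1def
  set t1 : ℝ := ((n:ℝ) - (k:ℝ)) * q / (((k:ℝ) + 1) * (1 - q)) with ht1def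
  set r2 : ℝ := r1 * (((k:ℝ) - 1) * (1 - q) / (((n:ℝ) - (k:ℝ) + 2) * q)) with hr2def
  set t2 : ℝ := t1 * ((((n:ℝ) - (k:ℝ)) - 1) * q / (((k:ℝ) + 2) * (1 - q))) with ht2def
  have hd1 : (((n:ℝ) - (k:ℝ) + 1) * q) ≠ 0 := mul_ne_zero hA1ne hqne
  have hd2 : (((n:ℝ) - (k:ℝ) + 2) * q) ≠ 0 := mul_ne_zero hA2ne hqne
  have hd3 : (((k:ℝ) + 1) * (1 - q)) ≠ 0 := mul_ne_zero hK1ne h1qne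
  have hd4 : (((k:ℝ) + 2) * (1 - q)) ≠ 0 := mul_ne_zero hK2ne h1qne
  have hF1 : F (k-1) = F k * r1 := by
    rw [hr1def, ← mul_div_assoc, eq_div_iff hd1]; linarith
  have hF2 : F (k-2) = F k * r2 := by
    rw [hr2def, ← mul_assoc, ← hF1, ← mul_div_assoc, eq_div_iff hd2]; linarith
  have hG1 : F (k+1) = F k * t1 := by
    rw [ht1def, ← mul_div_assoc, eq_div_iff hd3]; linarith
  have hG2 : F (k+2) = F k * t2 := by
    rw [ht2def, ← mul_assoc, ← hG1, ← mul_div_assoc, eq_div_iff hd4]; linarith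
  -- positivity of ratios
  have hr1pos : 0 < r1 := by
    rw [hr1def]
    exact div_pos (mul_pos (by linarith) h1q) (mul_pos (by linarith) hqpos)
  have ht1pos : 0 < t1 := by
    rw [ht1def]
    exact div_pos (mul_pos (by linarith) hqpos) (mul_pos (by linarith) h1q)
  have hr2pos : 0 < r2 := by
    rw [hr2def]
    exact mul_pos hr1pos
      (div_pos (mul_pos (by linarith) h1q) (mul_pos (by linarith) hqpos))
  have ht2pos : 0 < t2 := by
    rw [ht2def]
    exact mul_pos ht1pos
      (div_pos (mul_pos (by linarith) hqpos) (mul_pos (by linarith) h1q))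
  clear_value r1 t1 r2 t2
  -- products of ratios (q cancels)
  have hprod1 : r1 * t1 = (k:ℝ) * ((n:ℝ) - (k:ℝ))
      / (((n:ℝ) - (k:ℝ) + 1) * ((k:ℝ) + 1)) := by
    rw [hr1def, ht1def]
    field_simp
  have h712 : (7:ℝ)/12 ≤ r1 * t1 := by
    rw [hprod1]
    exact bound1_aux _ _ hK2 hA7
  have hprod1lb : (0.76:ℝ)^2 ≤ r1 * t1 := le_trans (by norm_num) h712
  have hprod2 : r2 * t2 = (r1 * t1) * (((k:ℝ) - 1) * ((n:ℝ) - (k:ℝ) - 1)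
      / ((((n:ℝ) - (k:ℝ) + 2)) * ((k:ℝ) + 2))) := by
    rw [hr2def, ht2def]
    field_simp
  have hfrac2 : (1:ℝ)/6 ≤ ((k:ℝ) - 1) * ((n:ℝ) - (k:ℝ) - 1)
      / ((((n:ℝ) - (k:ℝ) + 2)) * ((k:ℝ) + 2)) := bound2_aux _ _ hK2 hA7
  have hprod2lb : (0.31:ℝ)^2 ≤ r2 * t2 := by
    rw [hprod2]
    calc (0.31:ℝ)^2 ≤ (7/12) * (1/6) := by norm_num
      _ ≤ (r1 * t1) * (((k:ℝ) - 1) * ((n:ℝ) - (k:ℝ) - 1)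
          / ((((n:ℝ) - (k:ℝ) + 2)) * ((k:ℝ) + 2))) := by
          apply mul_le_mul h712 hfrac2 (by norm_num)
            (le_of_lt (mul_pos hr1pos ht1pos))
  -- AM-GM
  have ham1 : 2 * (0.76:ℝ) ≤ r1 + t1 := amgm_aux r1 t1 0.76 hr1pos ht1pos hprod1lb
  have ham2 : 2 * (0.31:ℝ) ≤ r2 + t2 := amgm_aux r2 t2 0.31 hr2pos ht2pos hprod2lb
  -- sum of pmf over range is 1
  have hsum : ∑ i ∈ Finset.range (n+1), F i = 1 := by
    calc ∑ i ∈ Finset.range (n+1), F i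
        = ∑ i ∈ Finset.range (n+1), q ^ i * (1 - q) ^ (n - i) * (n.choose i : ℝ) := by
          apply Finset.sum_congr rfl
          intro i _
          rw [hFdef]
          ring
      _ = (q + (1 - q)) ^ n := (add_pow q (1 - q) n).symm
      _ = 1 := by norm_num
  have hsub : ({k-2, k-1, k, k+1, k+2} : Finset ℕ) ⊆ Finset.range (n+1) := by
    intro i hi
    simp only [Finset.mem_insert, Finset.mem_singleton] at hi
    simp only [Finset.mem_range]
    omega
  have h5sum : F (k-2) + F (k-1) + F k + F (k+1) + F (k+2) ≤ 1 := by
    have hle := Finset.sum_le_sum_of_subset_of_nonneg hsub (fun i _ _ => hFnn i)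
    rw [hsum] at hle
    have heq : ∑ i ∈ ({k-2, k-1, k, k+1, k+2} : Finset ℕ), F i
        = F (k-2) + F (k-1) + F k + F (k+1) + F (k+2) := by
      rw [Finset.sum_insert (by simp only [Finset.mem_insert, Finset.mem_singleton]; omega),
        Finset.sum_insert (by simp only [Finset.mem_insert, Finset.mem_singleton]; omega),
        Finset.sum_insert (by simp only [Finset.mem_insert, Finset.mem_singleton]; omega),
        Finset.sum_insert (by simp only [Finset.mem_singleton]; omega),
        Finset.sum_singleton]
      ring
    linarith [heq ▸ hle]
  -- conclude
  have hfinal : F k * (1 + (r1 + t1) + (r2 + t2)) ≤ 1 := by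
    calc F k * (1 + (r1 + t1) + (r2 + t2))
        = F (k-2) + F (k-1) + F k + F (k+1) + F (k+2) := by
          rw [hF1, hF2, hG1, hG2]; ring
      _ ≤ 1 := h5sum
  have h314 : F k * 3.14 ≤ 1 := by
    have h314' : (3.14:ℝ) ≤ 1 + (r1 + t1) + (r2 + t2) := by linarith
    have hmono : F k * 3.14 ≤ F k * (1 + (r1 + t1) + (r2 + t2)) :=
      mul_le_mul_of_nonneg_left h314' hFkpos.le
    linarith
  have hFk35 : F k ≤ 0.35 := by linarith
  calc (n.choose k : ℝ) * q ^ k * (1 - q) ^ (n - k) = F k := by rw [hFdef]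
    _ ≤ 0.35 := hFk35
end

section
/- Let s ≥ 2 and N ≥ 1 be integers, let P = (p_1, …, p_N) be a sequence of N points in [0,1]^s, and let 0 ≤ i < s. Let x_1, …, x_i ∈ (0,1], set B := ∏_{j=1}^i [0,x_j] × [0,1]^{s−i} and C := ∏_{j=1}^i [0,x_j] × (1−1/s, 1] × [0,1]^{s−i−1}, and write N_B := #{j : p_j ∈ B}. Assume exc(B) ≥ 0, N_B ≥ N/4, and #{j : p_j ∈ C} ≤ N_B/s − (1/2)·sqrt(N_B/s). Then the box B' := ∏_{j=1}^i [0,x_j] × [0, 1−1/s] × [0,1]^{s−i−1} satisfies exc(B') ≥ (1 − 1/s)·exc(B) + sqrt(N/(16 s)). -/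
open MeasureTheory

/-- The excess of points of `P = (p_1, …, p_N)` in a measurable set `B ⊆ [0,1]^s`:
`exc(B) = #{j : p_j ∈ B} − N · vol(B)`. -/
noncomputable def excess (N s : ℕ) (P : Fin N → Fin s → ℝ) (B : Set (Fin s → ℝ)) : ℝ :=
  (Nat.card {j : Fin N // P j ∈ B} : ℝ) - N * (volume B).toReal

/-- One step of the construction: let `s ≥ 2`, `N ≥ 1`, `P = (p_1, …, p_N)` points in
`[0,1]^s`, `0 ≤ i < s` and `x_1, …, x_i ∈ (0,1]`. Put
`B = ∏_{j=1}^i [0,x_j] × [0,1]^{s−i}`,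
`C = ∏_{j=1}^i [0,x_j] × (1−1/s, 1] × [0,1]^{s−i−1}`, and `N_B = #{j : p_j ∈ B}`.
If `exc(B) ≥ 0`, `N_B ≥ N/4` and `#{j : p_j ∈ C} ≤ N_B/s − (1/2)·√(N_B/s)`, then
`B' = ∏_{j=1}^i [0,x_j] × [0, 1−1/s] × [0,1]^{s−i−1}` satisfies
`exc(B') ≥ (1 − 1/s)·exc(B) + √(N/(16s))`. -/
theorem excess_increase_step (s N : ℕ) (hs : 2 ≤ s) (hN : 1 ≤ N)
    (P : Fin N → Fin s → ℝ) (i : ℕ) (hi : i < s) (x : Fin s → ℝ)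
    (hx : ∀ j : Fin s, (j : ℕ) < i → x j ∈ Set.Ioc (0 : ℝ) 1)
    (B C B' : Set (Fin s → ℝ))
    (hB : B = Set.Icc 0 fun j : Fin s => if (j : ℕ) < i then x j else 1)
    (hC : C = {y ∈ B | 1 - 1 / (s : ℝ) < y ⟨i, hi⟩})
    (hB' : B' = Set.Icc 0 fun j : Fin s =>
      if (j : ℕ) < i then x j else if (j : ℕ) = i then 1 - 1 / (s : ℝ) else 1)
    (hexc : 0 ≤ excess N s P B)
    (hNB : (N : ℝ) / 4 ≤ (Nat.card {j : Fin N // P j ∈ B} : ℝ))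
    (hCcount : (Nat.card {j : Fin N // P j ∈ C} : ℝ) ≤
      (Nat.card {j : Fin N // P j ∈ B} : ℝ) / s
        - (1 / 2) * Real.sqrt ((Nat.card {j : Fin N // P j ∈ B} : ℝ) / s)) :
    (1 - 1 / (s : ℝ)) * excess N s P B + Real.sqrt ((N : ℝ) / (16 * s))
      ≤ excess N s P B' := by
  classical
  have hs0 : (0:ℝ) < s := by positivity
  have hs2 : (2:ℝ) ≤ s := by exact_mod_cast hs
  have ht0 : (0:ℝ) ≤ 1 - 1/(s:ℝ) := by
    have : 1/(s:ℝ) ≤ 1/2 := by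
      apply one_div_le_one_div_of_le <;> linarith
    linarith
  set f : Fin s → ℝ := fun j => if (j : ℕ) < i then x j else 1 with hf
  set f' : Fin s → ℝ := fun j =>
    if (j : ℕ) < i then x j else if (j : ℕ) = i then 1 - 1 / (s : ℝ) else 1 with hf'
  set k : Fin s := ⟨i, hi⟩ with hk
  -- membership characterizations
  have hmemB' : ∀ y : Fin s → ℝ, y ∈ B' ↔ y ∈ B ∧ y k ≤ 1 - 1/(s:ℝ) := by
    intro y
    rw [hB, hB', Set.mem_Icc, Set.mem_Icc]
    constructor
    · rintro ⟨h0, h1⟩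
      refine ⟨⟨h0, fun j => ?_⟩, ?_⟩
      · have h := h1 j
        by_cases hji : (j:ℕ) < i
        · simpa [hf, hf', hji] using h
        · by_cases hje : (j:ℕ) = i
          · simp only [hf, hf'] at h ⊢
            simp only [hji, if_false, hje, if_true] at h ⊢
            rw [if_neg (lt_irrefl i)] at h ⊢
            have h5 : (0:ℝ) ≤ 1/(s:ℝ) := by positivity
            linarith
          · simpa [hf, hf', hji, hje] using h
      · have h := h1 k
        simpa [hf', hk, Nat.lt_irrefl] using h
    · rintro ⟨⟨h0, h1⟩, h2⟩
      refine ⟨h0, fun j => ?_⟩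
      have h := h1 j
      by_cases hji : (j:ℕ) < i
      · simpa [hf, hf', hji] using h
      · by_cases hje : (j:ℕ) = i
        · have hjk : j = k := by ext; exact hje
          simp only [hf', hji, if_false, hje, if_true]
          rw [if_neg (lt_irrefl i), hjk]; exact h2
        · simpa [hf, hf', hji, hje] using h
  -- split cardinality
  set nB : ℕ := Nat.card {j : Fin N // P j ∈ B} with hnB
  set nC : ℕ := Nat.card {j : Fin N // P j ∈ C} with hnC
  set nB' : ℕ := Nat.card {j : Fin N // P j ∈ B'} with hnB'
  have hsplit : nB = nB' + nC := by
    rw [hnB, hnB', hnC]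
    simp only [Nat.card_eq_fintype_card, Fintype.card_subtype]
    rw [← Finset.card_union_of_disjoint, ← Finset.filter_or]
    · congr 1
      apply Finset.filter_congr
      intro j _
      simp only [hmemB' (P j), hC, Set.mem_setOf_eq]
      constructor
      · intro h
        rcases le_or_gt (P j k) (1 - 1/(s:ℝ)) with h' | h'
        · exact Or.inl ⟨h, h'⟩
        · exact Or.inr ⟨h, h'⟩
      · rintro (⟨h, _⟩ | ⟨h, _⟩) <;> exact h
    · rw [Finset.disjoint_filter]
      intro j _ hj hj'
      rw [hmemB' (P j)] at hj
      rw [hC] at hj'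
      exact absurd hj'.2 (not_lt.mpr hj.2)
  -- volumes
  have hxnn : ∀ j : Fin s, (j:ℕ) < i → 0 ≤ x j := fun j hj => le_of_lt (hx j hj).1
  have hf0 : (0 : Fin s → ℝ) ≤ f := by
    intro j
    by_cases hji : (j:ℕ) < i
    · simpa [hf, hji] using hxnn j hji
    · simp [hf, hji]
  have hf'0 : (0 : Fin s → ℝ) ≤ f' := by
    intro j
    by_cases hji : (j:ℕ) < i
    · simpa [hf', hji] using hxnn j hji
    · by_cases hje : (j:ℕ) = i
      · simpa [hf', hji, hje] using ht0
      · simp [hf', hji, hje]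
  have hvolB : (volume B).toReal = ∏ j, f j := by
    rw [hB, Real.volume_Icc_pi_toReal hf0]
    simp
  have hvolB' : (volume B').toReal = ∏ j, f' j := by
    rw [hB', Real.volume_Icc_pi_toReal hf'0]
    simp
  have hprod : ∏ j, f' j = (1 - 1/(s:ℝ)) * ∏ j, f j := by
    rw [← Finset.mul_prod_erase Finset.univ f' (Finset.mem_univ k),
        ← Finset.mul_prod_erase Finset.univ f (Finset.mem_univ k)]
    have hfk : f k = 1 := by simp [hf, hk]
    have hf'k : f' k = 1 - 1/(s:ℝ) := by simp [hf', hk]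
    rw [hfk, hf'k, one_mul]
    congr 1
    apply Finset.prod_congr rfl
    intro j hj
    have hjk : j ≠ k := (Finset.mem_erase.mp hj).1
    have hje : (j:ℕ) ≠ i := fun h => hjk (by ext; exact h)
    by_cases hji : (j:ℕ) < i <;> simp [hf, hf', hji, hje]
  -- sqrt estimate
  have hsqrt : Real.sqrt ((N : ℝ) / (16 * s)) ≤ (1/2) * Real.sqrt ((nB : ℝ) / s) := by
    have h1 : (N : ℝ) / (16 * s) ≤ ((nB : ℝ) / s) * (1/4) := by
      rw [div_le_iff₀ (by positivity : (0:ℝ) < 16*s)]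
      have h : (nB:ℝ)/s*(1/4)*(16*s) = 4*nB := by field_simp; ring
      rw [h]; linarith
    have h2 := Real.sqrt_le_sqrt h1
    have h3 : Real.sqrt (((nB:ℝ)/s)*(1/4)) = Real.sqrt ((nB:ℝ)/s) * Real.sqrt (1/4) :=
      Real.sqrt_mul (by positivity) _
    have h4 : Real.sqrt (1/4:ℝ) = 1/2 := by
      rw [show (1/4:ℝ) = (1/2)^2 by norm_num, Real.sqrt_sq (by norm_num)]
    rw [h3, h4] at h2
    linarith
  -- conclude
  have hcast : (nB:ℝ) = (nB':ℝ) + (nC:ℝ) := by exact_mod_cast hsplit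
  simp only [excess, ← hnB, ← hnB', hvolB, hvolB', hprod]
  have hring : (1-1/(s:ℝ))*((nB:ℝ) - N*∏ j, f j)
      = (nB:ℝ) - (nB:ℝ)/s - N*((1-1/(s:ℝ))*∏ j, f j) := by
    field_simp
  linarith [hsqrt, hCcount, hcast, hring]
end
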